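/- Let L = 7 and K = 4√3. Let A₁ = (x₁, y₁, 0) and A₂ = (x₂, y₂, 0) be two distinct points of the set A, set dᵢ = √(xᵢ² + yᵢ²) and vᵢ = (yᵢ, −xᵢ, K·dᵢ + L), and let lᵢ be the line through Aᵢ with direction vector vᵢ, for i = 1, 2. Then dist(l₁, l₂) ≥ 1. -/

import Mathlib

open Metric MeasureTheory Filter Matrix
open scoped RealInnerProductSpace

noncomputable section

/-- The point (x, y, z) in Euclidean 3-space. -/
def pt (x y z : ℝ) : EuclideanSpace ℝ (Fin 3) :=
  (WithLp.equiv 2 (Fin 3 → ℝ)).symm ![x, y, z]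

/-- The line through `P` with direction vector `v`. -/
def line (P v : EuclideanSpace ℝ (Fin 3)) : Set (EuclideanSpace ℝ (Fin 3)) :=
  {p | ∃ t : ℝ, p = P + t • v}

/-- Two direction vectors are parallel if they are scalar multiples of each other. -/
def Parallel3 (v w : EuclideanSpace ℝ (Fin 3)) : Prop :=
  ∃ c : ℝ, w = c • v ∨ v = c • w

/-- The infinite circular cylinder of axis `l` and radius `ρ`. -/
def cylinder (l : Set (EuclideanSpace ℝ (Fin 3))) (ρ : ℝ) : Set (EuclideanSpace ℝ (Fin 3)) :=
  {p | Metric.infDist p l ≤ ρ}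

/-- The angle θ_d = π / (3 · 2^{m(d)}), where 2^{m(d)} ≤ d < 2^{m(d)+1}. -/
def theta (d : ℕ) : ℝ := Real.pi / (3 * 2 ^ Nat.log 2 d)

/-- The ring of points at distance `d` from the origin. -/
def Aring (d : ℕ) : Set (EuclideanSpace ℝ (Fin 3)) :=
  {p | ∃ k : ℕ, 1 ≤ k ∧ k ≤ 6 * 2 ^ Nat.log 2 d ∧
    p = pt (d * Real.cos (k * theta d)) (d * Real.sin (k * theta d)) 0}

/-- The point set 𝒜 = ⋃_{d ≥ 32} 𝒜_d. -/
def Aset : Set (EuclideanSpace ℝ (Fin 3)) := ⋃ d ∈ Set.Ici 32, Aring d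

open Real

/-!
The distance between the lines `P₁ + s • v₁` and `P₂ + t • v₂` is at least `|⟪P₁ - P₂, w⟫| / ‖w‖`
for `w = v₁ × v₂`. Write `Pᵢ = nᵢ (cos αᵢ, sin αᵢ, 0)`, `cᵢ = K nᵢ + 7` and
`e = n₁ n₂ (1 - cos (α₁ - α₂))`. Since `c₁ n₂ - c₂ n₁ = 7 (n₂ - n₁)`, one finds
`⟪P₁ - P₂, w⟫ = -(7 (n₂ - n₁)² + (c₁ + c₂) e)` and
`‖w‖² = 49 (n₂ - n₁)² + 2 c₁ c₂ e + e (2 n₁ n₂ - e)`, so it suffices that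
`0 < ‖w‖² ≤ ⟪P₁ - P₂, w⟫²`.

All angles occurring in `A_{n₁}` and `A_{n₂}` are multiples of `π / (3 · 2^M)` with `2^M ≤ max n₁ n₂`.
Hence either the two points lie on the same ray (`e = 0`, and then `n₁ ≠ n₂` are integers), or
`max n₁ n₂ ^ 2 (1 - cos (α₁ - α₂)) ≥ π² / 18 - o(1) > 137 / 250`. In both cases the inequality
follows from `K² = 48` and `n₁, n₂ ≥ 32` by polynomial estimates.
-/

theorem abs_inner_sub_le_dist_mul_norm {E : Type*} [NormedAddCommGroup E] [InnerProductSpace ℝ E]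
    {P₁ P₂ v₁ v₂ w : E} (h₁ : ⟪v₁, w⟫ = 0) (h₂ : ⟪v₂, w⟫ = 0) (s t : ℝ) :
    |⟪P₁ - P₂, w⟫| ≤ dist (P₁ + s • v₁) (P₂ + t • v₂) * ‖w‖ := by
  have h : ⟪P₁ + s • v₁ - (P₂ + t • v₂), w⟫ = ⟪P₁ - P₂, w⟫ := by
    simp only [inner_sub_left, inner_add_left, inner_smul_left, h₁, h₂]
    simp
  rw [dist_eq_norm, ← h]
  exact abs_real_inner_le_norm _ _

theorem inner_pt (a b c a' b' c' : ℝ) : ⟪pt a b c, pt a' b' c'⟫ = a * a' + b * b' + c * c' := by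
  simp [pt, EuclideanSpace.inner_eq_star_dotProduct, dotProduct, Fin.sum_univ_three]
  ring

theorem one_le_dist_of_mem_line {x₁ y₁ c₁ x₂ y₂ c₂ : ℝ}
    (hpos : 0 < (c₁ * x₂ - c₂ * x₁) ^ 2 + (c₁ * y₂ - c₂ * y₁) ^ 2 + (x₁ * y₂ - x₂ * y₁) ^ 2)
    (hle : (c₁ * x₂ - c₂ * x₁) ^ 2 + (c₁ * y₂ - c₂ * y₁) ^ 2 + (x₁ * y₂ - x₂ * y₁) ^ 2 ≤
      ((x₁ - x₂) * (c₁ * x₂ - c₂ * x₁) + (y₁ - y₂) * (c₁ * y₂ - c₂ * y₁)) ^ 2)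
    {p q : EuclideanSpace ℝ (Fin 3)} (hp : p ∈ line (pt x₁ y₁ 0) (pt y₁ (-x₁) c₁))
    (hq : q ∈ line (pt x₂ y₂ 0) (pt y₂ (-x₂) c₂)) : 1 ≤ dist p q := by
  obtain ⟨s, rfl⟩ := hp
  obtain ⟨t, rfl⟩ := hq
  -- `w` is the cross product of the two direction vectors.
  set w := pt (c₁ * x₂ - c₂ * x₁) (c₁ * y₂ - c₂ * y₁) (x₁ * y₂ - x₂ * y₁)
  have hw : ‖w‖ ^ 2 = (c₁ * x₂ - c₂ * x₁) ^ 2 + (c₁ * y₂ - c₂ * y₁) ^ 2 + (x₁ * y₂ - x₂ * y₁) ^ 2 := by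
    rw [← real_inner_self_eq_norm_sq, inner_pt]; ring
  have hdist := abs_inner_sub_le_dist_mul_norm (P₁ := pt x₁ y₁ 0) (P₂ := pt x₂ y₂ 0)
    (v₁ := pt y₁ (-x₁) c₁) (v₂ := pt y₂ (-x₂) c₂) (w := w)
    (by rw [inner_pt]; ring) (by rw [inner_pt]; ring) s t
  have htriple : ⟪pt x₁ y₁ 0 - pt x₂ y₂ 0, w⟫ =
      (x₁ - x₂) * (c₁ * x₂ - c₂ * x₁) + (y₁ - y₂) * (c₁ * y₂ - c₂ * y₁) := by
    rw [inner_sub_left, inner_pt, inner_pt]; ring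
  rw [htriple] at hdist
  have hw0 : 0 < ‖w‖ := by nlinarith [norm_nonneg w]
  have hwle : ‖w‖ ≤ |(x₁ - x₂) * (c₁ * x₂ - c₂ * x₁) + (y₁ - y₂) * (c₁ * y₂ - c₂ * y₁)| :=
    abs_norm w ▸ sq_le_sq.mp (hw ▸ hle)
  exact le_of_mul_le_mul_right (by linarith) hw0

theorem cos_le_cos_of_le_of_le_two_pi_sub {θ x : ℝ} (hθ : 0 ≤ θ) (h₁ : θ ≤ x) (h₂ : x ≤ 2 * π - θ) :
    cos x ≤ cos θ := by
  rcases le_total x π with hx | hx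
  · exact cos_le_cos_of_nonneg_of_le_pi hθ hx h₁
  · rw [← cos_two_pi_sub x]
    exact cos_le_cos_of_nonneg_of_le_pi hθ (by linarith) (by linarith)

theorem cos_int_mul_eq_one_or_le {N : ℕ} {θ : ℝ} (hθ : 0 < θ) (hN : N * θ = 2 * π) (j : ℤ) :
    cos (j * θ) = 1 ∨ cos (j * θ) ≤ cos θ := by
  have hN0 : (0 : ℤ) < N := by
    rcases Nat.eq_zero_or_pos N with h | h
    · simp [h] at hN
    · exact_mod_cast h
  have hsplit : (j : ℝ) * θ = ((j % N : ℤ) : ℝ) * θ + ((j / N : ℤ) : ℝ) * (2 * π) := by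
    have hj : (j : ℝ) = ((j % N : ℤ) : ℝ) + N * ((j / N : ℤ) : ℝ) := by
      exact_mod_cast (Int.emod_add_mul_ediv j N).symm
    rw [hj, ← hN]
    ring
  rw [hsplit, cos_add_int_mul_two_pi]
  have hr0 := Int.emod_nonneg j hN0.ne'
  have hrN := Int.emod_lt_of_pos j hN0
  rcases hr0.eq_or_lt with h | h
  · left; simp [← h]
  · right
    have h₁ : (1 : ℝ) ≤ ((j % N : ℤ) : ℝ) := by exact_mod_cast h
    have h₂ : ((j % N : ℤ) : ℝ) ≤ N - 1 := by
      have : j % N ≤ N - 1 := by omega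
      exact_mod_cast this
    apply cos_le_cos_of_le_of_le_two_pi_sub hθ.le <;> nlinarith

theorem le_sq_mul_one_sub_cos_pi_div_three_mul {A : ℝ} (hA : 32 ≤ A) :
    137 / 250 ≤ A ^ 2 * (1 - cos (π / (3 * A))) := by
  set y := π / (3 * A) with hy
  have hAy : A * y = π / 3 := by rw [hy]; field_simp
  have hy0 : 0 < y := by positivity
  have hy1 : y ≤ 1 / 30 := by
    rw [hy, div_le_iff₀ (by positivity)]; nlinarith [pi_lt_d4]
  have hcos := (abs_le.mp (cos_bound (x := y) (by rw [abs_of_pos hy0]; linarith))).2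
  rw [abs_of_pos hy0] at hcos
  have h4 : A ^ 2 * y ^ 4 ≤ (π / 3) ^ 2 * (1 / 30) ^ 2 := by
    rw [← hAy]; have := pow_le_pow_left₀ hy0.le hy1 2; nlinarith [sq_nonneg A, sq_nonneg y]
  nlinarith [pi_gt_d4, pi_lt_d4, sq_nonneg A]

theorem theta_eq_pow_mul {n M : ℕ} (h : Nat.log 2 n ≤ M) :
    theta n = 2 ^ (M - Nat.log 2 n) * (π / (3 * 2 ^ M)) := by
  rw [theta, ← pow_sub_mul_pow (2 : ℝ) h]
  field_simp

theorem cos_sub_eq_one_or_le_max_sq_mul {n₁ n₂ : ℕ} (h₁ : 32 ≤ n₁) (h₂ : 32 ≤ n₂) (k₁ k₂ : ℕ) :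
    cos (k₁ * theta n₁ - k₂ * theta n₂) = 1 ∨
      137 / 250 ≤ (max n₁ n₂ : ℝ) ^ 2 * (1 - cos (k₁ * theta n₁ - k₂ * theta n₂)) := by
  set M := Nat.log 2 (max n₁ n₂)
  have hM₁ : Nat.log 2 n₁ ≤ M := Nat.log_mono_right (le_max_left _ _)
  have hM₂ : Nat.log 2 n₂ ≤ M := Nat.log_mono_right (le_max_right _ _)
  set θ := π / (3 * 2 ^ M) with hθ
  have hdiff : k₁ * theta n₁ - k₂ * theta n₂ =
      ((k₁ * 2 ^ (M - Nat.log 2 n₁) - k₂ * 2 ^ (M - Nat.log 2 n₂) : ℤ) : ℝ) * θ := by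
    rw [theta_eq_pow_mul hM₁, theta_eq_pow_mul hM₂]
    push_cast
    ring
  have hN : ((6 * 2 ^ M : ℕ) : ℝ) * θ = 2 * π := by
    rw [hθ]; push_cast; field_simp; ring
  rw [hdiff]
  refine (cos_int_mul_eq_one_or_le (by positivity) hN _).imp_right fun hcos => ?_
  have hpow : 2 ^ M ≤ max n₁ n₂ := Nat.pow_log_le_self 2 (by omega)
  have h32 : (32 : ℝ) ≤ 2 ^ M := by
    have : 5 ≤ M := Nat.le_log_of_pow_le (by norm_num) (by omega)
    calc (32 : ℝ) = 2 ^ 5 := by norm_num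
      _ ≤ 2 ^ M := pow_le_pow_right₀ (by norm_num) this
  have hpowR : ((2 : ℝ) ^ M) ^ 2 ≤ (max n₁ n₂ : ℝ) ^ 2 := by
    gcongr; exact_mod_cast hpow
  have := le_sq_mul_one_sub_cos_pi_div_three_mul h32
  have := cos_le_one θ
  nlinarith

theorem separation_poly_nonneg {K n₁ n₂ : ℝ} (hK : 6928 / 1000 ≤ K ∧ K ≤ 6929 / 1000)
    (h₁ : 32 ≤ n₁) (hgap : n₂ = n₁ ∨ n₁ + 1 ≤ n₂) :
    0 ≤ n₂ * (7 * K * (n₁ + n₂) * ((n₂ - n₁) ^ 2 - 1) + 49 * (2 * (n₂ - n₁) ^ 2 - 1) - 49 * n₁ * n₂)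
      + 24 * (137 / 250) * n₁ * (n₁ + n₂) ^ 2 := by
  have hu : 0 ≤ n₁ - 32 := by linarith
  rcases hgap with rfl | hgap
  · nlinarith [mul_nonneg (mul_nonneg (by linarith : (0:ℝ) ≤ n₂) (by linarith : (0:ℝ) ≤ n₂)) hu,
      mul_nonneg (by linarith : (0:ℝ) ≤ 6929 / 1000 - K) (sq_nonneg n₂)]
  · have hv : 0 ≤ n₂ - n₁ - 1 := by linarith
    have hKlow : 6928 / 1000 * ((n₁ + n₂) * n₂ * ((n₂ - n₁) ^ 2 - 1)) ≤
        K * ((n₁ + n₂) * n₂ * ((n₂ - n₁) ^ 2 - 1)) := by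
      have : 0 ≤ (n₂ - n₁) ^ 2 - 1 := by nlinarith
      apply mul_le_mul_of_nonneg_right hK.1
      have : 0 ≤ n₂ := by linarith
      positivity
    nlinarith [mul_nonneg (mul_nonneg hu hu) hv, mul_nonneg (mul_nonneg hu hv) hv,
      mul_nonneg (mul_nonneg hv hv) hv, mul_nonneg (mul_nonneg hu hu) hu]

theorem quadratic_le_sq_of_sep {K n₁ n₂ c₁ c₂ e : ℝ} (hK : K ^ 2 = 48) (hK0 : 0 < K)
    (hc₁ : c₁ = K * n₁ + 7) (hc₂ : c₂ = K * n₂ + 7) (h₁ : 32 ≤ n₁) (hgap : n₂ = n₁ ∨ n₁ + 1 ≤ n₂)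
    (he : (e = 0 ∧ n₁ + 1 ≤ n₂) ∨ 137 / 250 * n₁ ≤ n₂ * e) :
    49 * (n₂ - n₁) ^ 2 + 2 * c₁ * c₂ * e + e * (2 * n₁ * n₂ - e) ≤
      (7 * (n₂ - n₁) ^ 2 + (c₁ + c₂) * e) ^ 2 := by
  have hquartic : 0 ≤ 49 * (n₂ - n₁) ^ 2 * ((n₂ - n₁) ^ 2 - 1) := by
    rcases hgap with h | h
    · simp [h]
    · have : 1 ≤ (n₂ - n₁) ^ 2 := by nlinarith
      have : 0 ≤ (n₂ - n₁) ^ 2 - 1 := by linarith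
      positivity
  have hexp : (7 * (n₂ - n₁) ^ 2 + (c₁ + c₂) * e) ^ 2 -
      (49 * (n₂ - n₁) ^ 2 + 2 * c₁ * c₂ * e + e * (2 * n₁ * n₂ - e)) =
      49 * (n₂ - n₁) ^ 2 * ((n₂ - n₁) ^ 2 - 1) +
      2 * e * (7 * (n₂ - n₁) ^ 2 * (c₁ + c₂) - c₁ * c₂ - n₁ * n₂) + e ^ 2 * ((c₁ + c₂) ^ 2 + 1) := by
    ring
  rcases he with ⟨rfl, -⟩ | he
  · nlinarith
  have hn₂ : 0 < n₂ := by rcases hgap with h | h <;> linarith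
  have he0 : 0 < e := by
    by_contra! h
    nlinarith [mul_nonneg hn₂.le (neg_nonneg.mpr h)]
  have hKb : 6928 / 1000 ≤ K ∧ K ≤ 6929 / 1000 := ⟨by nlinarith, by nlinarith⟩
  -- `K ^ 2 = 48` turns the coefficient of `e ^ 2` into at least `48 (n₁ + n₂) ^ 2`,
  -- half of which is spent on the linear coefficient.
  have hlin : 0 ≤ 7 * (n₂ - n₁) ^ 2 * (c₁ + c₂) - c₁ * c₂ - n₁ * n₂ + 24 * e * (n₁ + n₂) ^ 2 := by
    have hpoly := separation_poly_nonneg hKb h₁ hgap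
    have hid : n₂ * (7 * (n₂ - n₁) ^ 2 * (c₁ + c₂) - c₁ * c₂ - n₁ * n₂ + 24 * e * (n₁ + n₂) ^ 2) =
        n₂ * (7 * K * (n₁ + n₂) * ((n₂ - n₁) ^ 2 - 1) + 49 * (2 * (n₂ - n₁) ^ 2 - 1) - 49 * n₁ * n₂)
          + 24 * (n₂ * e) * (n₁ + n₂) ^ 2 := by
      rw [hc₁, hc₂]; linear_combination (-n₁ * n₂ * n₂) * hK
    have : 0 ≤ n₂ * (7 * (n₂ - n₁) ^ 2 * (c₁ + c₂) - c₁ * c₂ - n₁ * n₂ + 24 * e * (n₁ + n₂) ^ 2) := by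
      linarith [mul_le_mul_of_nonneg_right he (sq_nonneg (n₁ + n₂))]
    exact nonneg_of_mul_nonneg_right (by linarith) hn₂
  have hquad : 48 * (n₁ + n₂) ^ 2 ≤ (c₁ + c₂) ^ 2 + 1 := by
    rw [hc₁, hc₂]; nlinarith [mul_pos hK0 (by linarith : 0 < n₁ + n₂)]
  nlinarith [mul_nonneg he0.le hlin, mul_le_mul_of_nonneg_left hquad (sq_nonneg e)]

theorem crossSq_pos_and_le_of_le {K n₁ n₂ c₁ c₂ x₁ y₁ x₂ y₂ g : ℝ} (hK : K ^ 2 = 48) (hK0 : 0 < K)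
    (hc₁ : c₁ = K * n₁ + 7) (hc₂ : c₂ = K * n₂ + 7) (h₁ : 32 ≤ n₁) (hgap : n₂ = n₁ ∨ n₁ + 1 ≤ n₂)
    (hr₁ : x₁ ^ 2 + y₁ ^ 2 = n₁ ^ 2) (hr₂ : x₂ ^ 2 + y₂ ^ 2 = n₂ ^ 2)
    (hδ : x₁ * x₂ + y₁ * y₂ = n₁ * n₂ * g)
    (hsep : (g = 1 ∧ n₁ + 1 ≤ n₂) ∨ 137 / 250 ≤ n₂ ^ 2 * (1 - g)) :
    0 < (c₁ * x₂ - c₂ * x₁) ^ 2 + (c₁ * y₂ - c₂ * y₁) ^ 2 + (x₁ * y₂ - x₂ * y₁) ^ 2 ∧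
      (c₁ * x₂ - c₂ * x₁) ^ 2 + (c₁ * y₂ - c₂ * y₁) ^ 2 + (x₁ * y₂ - x₂ * y₁) ^ 2 ≤
        ((x₁ - x₂) * (c₁ * x₂ - c₂ * x₁) + (y₁ - y₂) * (c₁ * y₂ - c₂ * y₁)) ^ 2 := by
  set e := n₁ * n₂ * (1 - g) with he
  have hω : (x₁ * y₂ - x₂ * y₁) ^ 2 = e * (2 * n₁ * n₂ - e) := by
    linear_combination (x₂ ^ 2 + y₂ ^ 2) * hr₁ + n₁ ^ 2 * hr₂ - (x₁ * x₂ + y₁ * y₂ + n₁ * n₂ * g) * hδ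
  have hN : (c₁ * x₂ - c₂ * x₁) ^ 2 + (c₁ * y₂ - c₂ * y₁) ^ 2 + (x₁ * y₂ - x₂ * y₁) ^ 2 =
      49 * (n₂ - n₁) ^ 2 + 2 * c₁ * c₂ * e + (x₁ * y₂ - x₂ * y₁) ^ 2 := by
    subst hc₁ hc₂
    linear_combination (K * n₁ + 7) ^ 2 * hr₂ + (K * n₂ + 7) ^ 2 * hr₁ -
      2 * (K * n₁ + 7) * (K * n₂ + 7) * hδ
  have hT : (x₁ - x₂) * (c₁ * x₂ - c₂ * x₁) + (y₁ - y₂) * (c₁ * y₂ - c₂ * y₁) =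
      -(7 * (n₂ - n₁) ^ 2 + (c₁ + c₂) * e) := by
    subst hc₁ hc₂
    linear_combination (K * n₁ + 7 + (K * n₂ + 7)) * hδ - (K * n₂ + 7) * hr₁ - (K * n₁ + 7) * hr₂
  have hn₂ : 0 < n₂ := by rcases hgap with h | h <;> linarith
  have hc : 0 < c₁ * c₂ := by subst hc₁ hc₂; positivity
  have he' : (e = 0 ∧ n₁ + 1 ≤ n₂) ∨ 137 / 250 * n₁ ≤ n₂ * e := by
    refine hsep.imp (fun ⟨hg, hgap⟩ => ⟨by simp [he, hg], hgap⟩) fun hsep => ?_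
    rw [he]; nlinarith [mul_le_mul_of_nonneg_left hsep (by linarith : 0 ≤ n₁)]
  rw [hN, hT, neg_sq, hω]
  refine ⟨?_, quadratic_le_sq_of_sep hK hK0 hc₁ hc₂ h₁ hgap he'⟩
  rw [← hω]
  rcases he' with ⟨he0, hgap⟩ | he'
  · have : 0 < (n₂ - n₁) ^ 2 := by nlinarith
    rw [he0]; nlinarith [sq_nonneg (x₁ * y₂ - x₂ * y₁)]
  · have : 0 < e := by nlinarith
    nlinarith [sq_nonneg (x₁ * y₂ - x₂ * y₁), sq_nonneg (n₂ - n₁)]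

theorem crossSq_pos_and_le {K c₁ c₂ x₁ y₁ x₂ y₂ g : ℝ} {n₁ n₂ : ℕ} (hK : K ^ 2 = 48) (hK0 : 0 < K)
    (hc₁ : c₁ = K * n₁ + 7) (hc₂ : c₂ = K * n₂ + 7) (h₁ : 32 ≤ n₁) (h₂ : 32 ≤ n₂)
    (hr₁ : x₁ ^ 2 + y₁ ^ 2 = n₁ ^ 2) (hr₂ : x₂ ^ 2 + y₂ ^ 2 = n₂ ^ 2)
    (hδ : x₁ * x₂ + y₁ * y₂ = n₁ * n₂ * g)
    (hsep : (g = 1 ∧ n₁ ≠ n₂) ∨ 137 / 250 ≤ (max n₁ n₂ : ℝ) ^ 2 * (1 - g)) :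
    0 < (c₁ * x₂ - c₂ * x₁) ^ 2 + (c₁ * y₂ - c₂ * y₁) ^ 2 + (x₁ * y₂ - x₂ * y₁) ^ 2 ∧
      (c₁ * x₂ - c₂ * x₁) ^ 2 + (c₁ * y₂ - c₂ * y₁) ^ 2 + (x₁ * y₂ - x₂ * y₁) ^ 2 ≤
        ((x₁ - x₂) * (c₁ * x₂ - c₂ * x₁) + (y₁ - y₂) * (c₁ * y₂ - c₂ * y₁)) ^ 2 := by
  wlog h : n₁ ≤ n₂ generalizing n₁ n₂ c₁ c₂ x₁ y₁ x₂ y₂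
  · obtain ⟨hpos, hle⟩ := this hc₂ hc₁ h₂ h₁ hr₂ hr₁ (by linear_combination hδ)
      (by rwa [ne_comm, max_comm]) (by omega)
    exact ⟨by linarith, by linarith⟩
  have hgap : (n₂ : ℝ) = n₁ ∨ (n₁ : ℝ) + 1 ≤ n₂ := by
    rcases h.eq_or_lt with h | h
    · exact Or.inl (by rw [h])
    · exact Or.inr (by exact_mod_cast h)
  refine crossSq_pos_and_le_of_le hK hK0 hc₁ hc₂ (by exact_mod_cast h₁) hgap hr₁ hr₂ hδ ?_
  rw [max_eq_right (by exact_mod_cast h)] at hsep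
  exact hsep.imp_left fun ⟨hg, hne⟩ => ⟨hg, by exact_mod_cast (h.lt_of_ne hne : n₁ < n₂)⟩

theorem cos_eq_and_sin_eq_of_cos_sub_eq_one {a b : ℝ} (h : cos (a - b) = 1) :
    cos a = cos b ∧ sin a = sin b := by
  obtain ⟨k, hk⟩ := (cos_eq_one_iff _).mp h
  rw [show a = b + k * (2 * π) by linarith]
  exact ⟨cos_add_int_mul_two_pi b k, sin_add_int_mul_two_pi b k⟩

theorem exists_of_pt_mem_Aset {x y : ℝ} (h : pt x y 0 ∈ Aset) :
    ∃ n : ℕ, 32 ≤ n ∧ ∃ k : ℕ, x = n * cos (k * theta n) ∧ y = n * sin (k * theta n) := by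
  simp only [Aset, Set.mem_iUnion, Set.mem_Ici, Aring, Set.mem_ofPred_eq] at h
  obtain ⟨n, hn, k, -, -, hpt⟩ := h
  exact ⟨n, hn, k, congrArg (fun p => p 0) hpt, congrArg (fun p => p 1) hpt⟩

theorem stmt_17 (L K x₁ y₁ x₂ y₂ d₁ d₂ : ℝ) (hL : L = 7) (hK : K = 4 * Real.sqrt 3)
    (h₁ : pt x₁ y₁ 0 ∈ Aset) (h₂ : pt x₂ y₂ 0 ∈ Aset)
    (hne : pt x₁ y₁ 0 ≠ pt x₂ y₂ 0)
    (hd₁ : d₁ = Real.sqrt (x₁ ^ 2 + y₁ ^ 2))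
    (hd₂ : d₂ = Real.sqrt (x₂ ^ 2 + y₂ ^ 2)) :
    ∀ p ∈ line (pt x₁ y₁ 0) (pt y₁ (-x₁) (K * d₁ + L)),
      ∀ q ∈ line (pt x₂ y₂ 0) (pt y₂ (-x₂) (K * d₂ + L)),
        1 ≤ dist p q := by
  subst hL
  have hK0 : 0 < K := by rw [hK]; positivity
  have hK2 : K ^ 2 = 48 := by rw [hK, mul_pow, sq_sqrt (by norm_num)]; norm_num
  obtain ⟨n₁, hn₁, k₁, rfl, rfl⟩ := exists_of_pt_mem_Aset h₁
  obtain ⟨n₂, hn₂, k₂, rfl, rfl⟩ := exists_of_pt_mem_Aset h₂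
  have hr (n α : ℝ) : (n * cos α) ^ 2 + (n * sin α) ^ 2 = n ^ 2 := by
    linear_combination n ^ 2 * sin_sq_add_cos_sq α
  rw [hr, sqrt_sq (Nat.cast_nonneg _)] at hd₁ hd₂
  subst hd₁ hd₂
  have hsep := (cos_sub_eq_one_or_le_max_sq_mul hn₁ hn₂ k₁ k₂).imp_left fun h =>
    And.intro h fun (hn : n₁ = n₂) => hne (by
      obtain ⟨hcos, hsin⟩ := cos_eq_and_sin_eq_of_cos_sub_eq_one h
      rw [hcos, hsin, hn])
  obtain ⟨hpos, hle⟩ := crossSq_pos_and_le hK2 hK0 rfl rfl hn₁ hn₂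
    (hr _ (k₁ * theta n₁)) (hr _ (k₂ * theta n₂)) (by rw [cos_sub]; ring) hsep
  intro p hp q hq
  exact one_le_dist_of_mem_line hpos hle hp hq
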